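/- arXiv:1708.00681 — 3 statements merged into one kernel-verified Lean document; each statement's English description precedes it below -/
import Mathlib

section
/- For a convex polygon P, any maximum-area convex polygon with k vertices inscribed in P (vertices on the boundary of P) can be chosen so that all its vertices are vertices of P. -/
open MeasureTheory

/-- Cross product of two planar vectors. -/
noncomputable def cross (u v : ℝ × ℝ) : ℝ := u.1 * v.2 - u.2 * v.1

/-- Signed area of triangle `p q r`. -/
noncomputable def sArea (p q r : ℝ × ℝ) : ℝ :=
  ((q.1 - p.1) * (r.2 - p.2) - (q.2 - p.2) * (r.1 - p.1)) / 2

/-- (Unsigned) area of triangle `p q r`. -/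
noncomputable def triArea (p q r : ℝ × ℝ) : ℝ :=
  |(q.1 - p.1) * (r.2 - p.2) - (q.2 - p.2) * (r.1 - p.1)| / 2

/-- Shoelace area of a quadrilateral `p q r s` given in cyclic order. -/
noncomputable def quadArea (p q r s : ℝ × ℝ) : ℝ :=
  |p.1 * (q.2 - s.2) + q.1 * (r.2 - p.2) + r.1 * (s.2 - q.2) + s.1 * (p.2 - r.2)| / 2

/-- Area of the convex hull of a finite planar point set. -/
noncomputable def hullArea (S : Finset (ℝ × ℝ)) : ENNReal :=
  volume (convexHull ℝ (S : Set (ℝ × ℝ)))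

/-!
For a fixed finite set `E`, the area of `conv (E ∪ {x})` is a convex function of `x`. Indeed,
slice the plane by lines parallel to `b - a`: each chord of `conv (E ∪ {t a + (1 - t) b})` lies
in the `t`-combination of the corresponding chords of `conv (E ∪ {a})` and `conv (E ∪ {b})`, so
its length is at most the `t`-combination of theirs, and Fubini integrates this over the slices.
A convex function on `conv V` is maximised at a point of `V`, so the vertices of an inscribed
`k`-gon can be moved one at a time to vertices of `P` without losing area; the at most `k`
vertices obtained are then completed to `k` vertices of `P`.
-/

open Set

theorem Convex.prodMk_preimage {𝕜 E F : Type*} [Semiring 𝕜] [PartialOrder 𝕜]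
    [AddCommMonoid E] [AddCommMonoid F] [Module 𝕜 E] [Module 𝕜 F]
    {s : Set (E × F)} (hs : Convex 𝕜 s) (x : E) : Convex 𝕜 (Prod.mk x ⁻¹' s) :=
  convex_iff_segment_subset.2 fun _ h₁ _ h₂ => by
    rw [← image_subset_iff, Prod.image_mk_segment_right]
    exact hs.segment_subset h₁ h₂

theorem Convex.ofReal_sSup_sub_sInf_le_volume {s : Set ℝ} (hs : Convex ℝ s)
    (hne : s.Nonempty) (hb : Bornology.IsBounded s) :
    ENNReal.ofReal (sSup s - sInf s) ≤ volume s := by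
  rw [← Real.volume_Ioo]
  exact measure_mono ((hs.isConnected hne).Ioo_csInf_csSup_subset hb.bddBelow hb.bddAbove)

theorem Real.volume_le_of_forall_eq_convexComb {Y S T : Set ℝ} {t : ℝ}
    (ht₀ : 0 ≤ t) (ht₁ : t ≤ 1) (hS : Convex ℝ S) (hSb : Bornology.IsBounded S) (hT : Convex ℝ T)
    (hTb : Bornology.IsBounded T) (hY : ∀ y ∈ Y, ∃ s ∈ S, ∃ r ∈ T, y = t * s + (1 - t) * r) :
    volume Y ≤ ENNReal.ofReal t * volume S + ENNReal.ofReal (1 - t) * volume T := by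
  rcases Y.eq_empty_or_nonempty with rfl | ⟨y₀, hy₀⟩
  · simp
  obtain ⟨s₀, hs₀, r₀, hr₀, -⟩ := hY y₀ hy₀
  have hY_sub : Y ⊆ Icc (t * sInf S + (1 - t) * sInf T) (t * sSup S + (1 - t) * sSup T) := by
    intro y hy
    obtain ⟨s, hs, r, hr, rfl⟩ := hY y hy
    have := csInf_le hSb.bddBelow hs
    have := le_csSup hSb.bddAbove hs
    have := csInf_le hTb.bddBelow hr
    have := le_csSup hTb.bddAbove hr
    constructor <;> nlinarith
  have hS_len : 0 ≤ sSup S - sInf S :=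
    sub_nonneg.2 (csInf_le_csSup ⟨s₀, hs₀⟩ hSb.bddBelow hSb.bddAbove)
  have hT_len : 0 ≤ sSup T - sInf T :=
    sub_nonneg.2 (csInf_le_csSup ⟨r₀, hr₀⟩ hTb.bddBelow hTb.bddAbove)
  calc volume Y ≤ ENNReal.ofReal (t * (sSup S - sInf S) + (1 - t) * (sSup T - sInf T)) :=
        (measure_mono hY_sub).trans_eq (by rw [Real.volume_Icc]; ring_nf)
    _ = ENNReal.ofReal t * ENNReal.ofReal (sSup S - sInf S)
          + ENNReal.ofReal (1 - t) * ENNReal.ofReal (sSup T - sInf T) := by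
        rw [ENNReal.ofReal_add (by positivity) (mul_nonneg (by linarith) hT_len),
          ENNReal.ofReal_mul ht₀, ENNReal.ofReal_mul (by linarith)]
    _ ≤ _ := by
        grw [hS.ofReal_sSup_sub_sInf_le_volume ⟨s₀, hs₀⟩ hSb,
          hT.ofReal_sSup_sub_sInf_le_volume ⟨r₀, hr₀⟩ hTb]

theorem Bornology.IsBounded.prodMk_preimage {α β : Type*} [PseudoMetricSpace α]
    [PseudoMetricSpace β] {s : Set (α × β)} (hs : Bornology.IsBounded s) (x : α) :
    Bornology.IsBounded (Prod.mk x ⁻¹' s) :=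
  (LipschitzWith.prod_snd.isBounded_image hs).subset fun y hy => ⟨(x, y), hy, rfl⟩

theorem volume_le_of_forall_eq_convexComb_of_fst_eq {X A B : Set (ℝ × ℝ)} {t : ℝ}
    (ht₀ : 0 ≤ t) (ht₁ : t ≤ 1) (hX : MeasurableSet X)
    (hA : Convex ℝ A) (hAm : MeasurableSet A) (hAb : Bornology.IsBounded A)
    (hB : Convex ℝ B) (hBm : MeasurableSet B) (hBb : Bornology.IsBounded B)
    (hXAB : ∀ z ∈ X, ∃ p ∈ A, ∃ q ∈ B, p.1 = q.1 ∧ z = t • p + (1 - t) • q) :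
    volume X ≤ ENNReal.ofReal t * volume A + ENNReal.ofReal (1 - t) * volume B := by
  have h_slice (x : ℝ) : volume (Prod.mk x ⁻¹' X) ≤ ENNReal.ofReal t * volume (Prod.mk x ⁻¹' A)
      + ENNReal.ofReal (1 - t) * volume (Prod.mk x ⁻¹' B) := by
    refine Real.volume_le_of_forall_eq_convexComb ht₀ ht₁ (hA.prodMk_preimage x)
      (hAb.prodMk_preimage x) (hB.prodMk_preimage x) (hBb.prodMk_preimage x) fun y hy => ?_
    obtain ⟨⟨p₁, p₂⟩, hp, ⟨q₁, q₂⟩, hq, rfl : p₁ = q₁, h⟩ := hXAB _ hy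
    simp only [Prod.ext_iff, Prod.smul_mk, Prod.mk_add_mk, smul_eq_mul] at h
    obtain rfl : x = p₁ := by linear_combination h.1
    exact ⟨p₂, hp, q₂, hq, h.2⟩
  rw [Measure.volume_eq_prod, Measure.prod_apply hX, Measure.prod_apply hAm,
    Measure.prod_apply hBm,
    ← lintegral_const_mul _ (measurable_measure_prodMk_left hAm),
    ← lintegral_const_mul _ (measurable_measure_prodMk_left hBm),
    ← lintegral_add_left ((measurable_measure_prodMk_left hAm).const_mul _)]
  exact lintegral_mono h_slice

theorem volume_le_of_forall_eq_convexComb_of_sub_eq_smul {X A B : Set (ℝ × ℝ)} {t : ℝ}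
    {u : ℝ × ℝ} (hu : u ≠ 0) (ht₀ : 0 ≤ t) (ht₁ : t ≤ 1) (hX : IsCompact X)
    (hA : Convex ℝ A) (hAc : IsCompact A) (hB : Convex ℝ B) (hBc : IsCompact B)
    (hXAB : ∀ z ∈ X, ∃ p ∈ A, ∃ q ∈ B, (∃ c : ℝ, p - q = c • u) ∧ z = t • p + (1 - t) • q) :
    volume X ≤ ENNReal.ofReal t * volume A + ENNReal.ofReal (1 - t) * volume B := by
  -- `L` maps lines parallel to `u` to vertical lines.
  set L := Matrix.toLin (Module.Basis.finTwoProd ℝ) (Module.Basis.finTwoProd ℝ)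
    !![-u.2, u.1; u.1, u.2]
  have hL_fst (p : ℝ × ℝ) : (L p).1 = cross u p := by
    simp only [L, Matrix.toLin_finTwoProd_apply, cross]; ring
  have hL_det : LinearMap.det L ≠ 0 := by
    rw [LinearMap.det_toLin, Matrix.det_fin_two_of]
    intro h
    obtain ⟨h₁, h₂⟩ := (add_eq_zero_iff_of_nonneg (sq_nonneg u.1) (sq_nonneg u.2)).1
      (by linear_combination -h)
    exact hu (Prod.ext (pow_eq_zero_iff two_ne_zero |>.1 h₁)
      (pow_eq_zero_iff two_ne_zero |>.1 h₂))
  have hL : Continuous L := L.continuous_of_finiteDimensional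
  have key := volume_le_of_forall_eq_convexComb_of_fst_eq ht₀ ht₁
    (hX.image hL).measurableSet (hA.linear_image L) (hAc.image hL).measurableSet
    (hAc.image hL).isBounded (hB.linear_image L) (hBc.image hL).measurableSet
    (hBc.image hL).isBounded ?_
  · simp only [Measure.addHaar_image_linearMap] at key
    rw [mul_left_comm, mul_left_comm (ENNReal.ofReal (1 - t)), ← mul_add] at key
    exact (ENNReal.mul_le_mul_iff_right (by simpa using hL_det) ENNReal.ofReal_ne_top).1 key
  rintro _ ⟨z, hz, rfl⟩
  obtain ⟨p, hp, q, hq, ⟨c, hpq⟩, rfl⟩ := hXAB z hz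
  refine ⟨L p, mem_image_of_mem L hp, L q, mem_image_of_mem L hq, ?_, by simp⟩
  rw [hL_fst, hL_fst, eq_add_of_sub_eq hpq]
  simp only [cross, Prod.fst_add, Prod.snd_add, Prod.smul_fst, Prod.smul_snd, smul_eq_mul]
  ring

theorem exists_eq_convexComb_of_mem_convexHull_insert {𝕜 E : Type*} [Field 𝕜] [LinearOrder 𝕜]
    [IsStrictOrderedRing 𝕜] [AddCommGroup E] [Module 𝕜 E] {s : Set E} {a b z : E} {t : 𝕜}
    (hz : z ∈ convexHull 𝕜 (insert (t • a + (1 - t) • b) s)) :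
    ∃ p ∈ convexHull 𝕜 (insert a s), ∃ q ∈ convexHull 𝕜 (insert b s),
      (∃ c : 𝕜, p - q = c • (a - b)) ∧ z = t • p + (1 - t) • q := by
  rcases s.eq_empty_or_nonempty with rfl | hs
  · rw [insert_empty_eq, convexHull_singleton, mem_singleton_iff] at hz
    exact ⟨a, by simp, b, by simp, ⟨1, (one_smul 𝕜 _).symm⟩, hz⟩
  rw [convexHull_insert hs, mem_convexJoin] at hz
  obtain ⟨_, rfl, y, hy, α, β, hα, hβ, hαβ, rfl⟩ := hz
  have mem (c : E) : α • c + β • y ∈ convexHull 𝕜 (insert c s) :=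
    convex_convexHull 𝕜 _ (subset_convexHull 𝕜 _ (mem_insert c s))
      (convexHull_mono (subset_insert c s) hy) hα hβ hαβ
  exact ⟨_, mem a, _, mem b, ⟨α, by module⟩, by module⟩

theorem volume_convexHull_insert_convexComb_le {s : Set (ℝ × ℝ)} (hs : s.Finite) (a b : ℝ × ℝ)
    {t : ℝ} (ht₀ : 0 ≤ t) (ht₁ : t ≤ 1) :
    volume (convexHull ℝ (insert (t • a + (1 - t) • b) s)) ≤
      ENNReal.ofReal t * volume (convexHull ℝ (insert a s)) +
        ENNReal.ofReal (1 - t) * volume (convexHull ℝ (insert b s)) := by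
  rcases eq_or_ne a b with rfl | hab
  · rw [← add_smul, add_sub_cancel, one_smul, ← add_mul, ← ENNReal.ofReal_add ht₀ (by linarith),
      add_sub_cancel, ENNReal.ofReal_one, one_mul]
  exact volume_le_of_forall_eq_convexComb_of_sub_eq_smul (sub_ne_zero.2 hab) ht₀ ht₁
    ((hs.insert _).isCompact_convexHull ℝ) (convex_convexHull ℝ _)
    ((hs.insert a).isCompact_convexHull ℝ) (convex_convexHull ℝ _)
    ((hs.insert b).isCompact_convexHull ℝ)
    fun _ hz => exists_eq_convexComb_of_mem_convexHull_insert hz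

theorem convexOn_measureReal_convexHull_insert {s : Set (ℝ × ℝ)} (hs : s.Finite) :
    ConvexOn ℝ univ fun x => volume.real (convexHull ℝ (insert x s)) := by
  refine ⟨convex_univ, fun a _ b _ t t' ht ht' htt' => ?_⟩
  obtain rfl : t' = 1 - t := by linarith
  have h_fin (x : ℝ × ℝ) : volume (convexHull ℝ (insert x s)) ≠ ⊤ :=
    (hs.insert x).isCompact_convexHull ℝ |>.measure_ne_top
  have h := volume_convexHull_insert_convexComb_le hs a b ht (by linarith)
  rw [← ENNReal.ofReal_toReal (h_fin a), ← ENNReal.ofReal_toReal (h_fin b),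
    ← ENNReal.ofReal_mul ht, ← ENNReal.ofReal_mul ht',
    ← ENNReal.ofReal_add (by positivity) (by positivity)] at h
  exact ENNReal.toReal_le_of_le_ofReal (by positivity) h

theorem exists_mem_volume_convexHull_insert_le {s V : Set (ℝ × ℝ)} (hs : s.Finite) {x : ℝ × ℝ}
    (hx : x ∈ convexHull ℝ V) :
    ∃ v ∈ V, volume (convexHull ℝ (insert x s)) ≤ volume (convexHull ℝ (insert v s)) := by
  obtain ⟨v, hv, h⟩ := (convexOn_measureReal_convexHull_insert hs).exists_ge_of_mem_convexHull
    (subset_univ V) hx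
  exact ⟨v, hv, (ENNReal.toReal_le_toReal ((hs.insert x).isCompact_convexHull ℝ).measure_ne_top
    ((hs.insert v).isCompact_convexHull ℝ).measure_ne_top).1 h⟩

theorem exists_subset_card_le_volume_convexHull_union_le {V : Finset (ℝ × ℝ)}
    (S : Finset (ℝ × ℝ)) (hS : (S : Set (ℝ × ℝ)) ⊆ convexHull ℝ V) {E : Set (ℝ × ℝ)}
    (hE : E.Finite) :
    ∃ T ⊆ V, T.card ≤ S.card ∧
      volume (convexHull ℝ (S ∪ E)) ≤ volume (convexHull ℝ (T ∪ E)) := by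
  induction S using Finset.induction_on generalizing E with
  | empty => exact ⟨∅, Finset.empty_subset V, le_rfl, le_rfl⟩
  | insert x S hxS ih =>
    rw [Finset.coe_insert, insert_subset_iff] at hS
    obtain ⟨v, hvV, hv⟩ := exists_mem_volume_convexHull_insert_le (S.finite_toSet.union hE) hS.1
    obtain ⟨T, hTV, hTS, hT⟩ := ih hS.2 (hE.insert v)
    refine ⟨insert v T, Finset.insert_subset hvV hTV, ?_, ?_⟩
    · grw [Finset.card_insert_le, Finset.card_insert_of_notMem hxS, hTS]
    · rw [union_insert, union_insert] at hT
      rw [Finset.coe_insert, Finset.coe_insert, insert_union, insert_union]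
      exact hv.trans hT

theorem max_area_kgon_at_vertices_general (V : Finset (ℝ × ℝ)) (k : ℕ)
    (hV : k ≤ V.card) :
    ∃ T ⊆ V, T.card = k ∧
      ∀ S : Finset (ℝ × ℝ), S.card = k →
        (S : Set (ℝ × ℝ)) ⊆ frontier (convexHull ℝ (V : Set (ℝ × ℝ))) →
        hullArea S ≤ hullArea T := by
  obtain ⟨T, hT, hT_max⟩ :=
    (V.powersetCard k).exists_max_image hullArea (Finset.powersetCard_nonempty.2 hV)
  obtain ⟨hTV, hTk⟩ := Finset.mem_powersetCard.1 hT
  refine ⟨T, hTV, hTk, fun S hSk hS => ?_⟩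
  obtain ⟨T₁, hT₁V, hT₁S, hST₁⟩ := exists_subset_card_le_volume_convexHull_union_le S
    (hS.trans (V.finite_toSet.isClosed_convexHull ℝ).frontier_subset) finite_empty
  obtain ⟨T₂, hT₁₂, hT₂V, hT₂k⟩ := Finset.exists_subsuperset_card_eq hT₁V (hSk ▸ hT₁S) hV
  simp only [union_empty] at hST₁
  calc hullArea S ≤ hullArea T₁ := hST₁
    _ ≤ hullArea T₂ := measure_mono (convexHull_mono (Finset.coe_subset.2 hT₁₂))
    _ ≤ hullArea T := hT_max T₂ (Finset.mem_powersetCard.2 ⟨hT₂V, hT₂k⟩)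

/-- A maximum-area inscribed `k`-gon can be chosen with its vertices at vertices of `P`. -/
theorem max_area_kgon_at_vertices (V : Finset (ℝ × ℝ)) (k : ℕ) (hk : 3 ≤ k)
    (hV : k ≤ V.card)
    (hconv : ∀ v ∈ V, v ∉ convexHull ℝ ((V.erase v : Finset (ℝ × ℝ)) : Set (ℝ × ℝ))) :
    ∃ T ⊆ V, T.card = k ∧
      ∀ S : Finset (ℝ × ℝ), S.card = k →
        (S : Set (ℝ × ℝ)) ⊆ frontier (convexHull ℝ (V : Set (ℝ × ℝ))) →
        hullArea S ≤ hullArea T :=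
  max_area_kgon_at_vertices_general V k hV
end

section
/- If a point v lies in the open segment between two points u and w on the boundary of a convex region, then the area of a triangle with apex v over a fixed base is at most the maximum of the areas obtained by replacing v with u or with w; consequently, a maximum-area triangle inscribed in a convex polygon has all vertices at vertices of the polygon. -/
open MeasureTheory

/-! The area `triArea · b c` is the absolute value of an affine function of the apex, hence
convex: its maximum over a segment is at an endpoint, and over a convex hull at a point of the
generating set. Applying this to one vertex at a time moves a triangle inscribed in
`convexHull V` onto vertices of `V` without losing area, and since Lebesgue measure scales by
`|det|` under affine maps, `hullArea` of a triangle is a monotone function of `triArea`. -/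

lemma triArea_eq_abs_sArea (p q r : ℝ × ℝ) : triArea p q r = |sArea p q r| := by
  rw [triArea, sArea, abs_div, abs_two]

lemma triArea_rotate (p q r : ℝ × ℝ) : triArea p q r = triArea q r p := by
  simp only [triArea_eq_abs_sArea, sArea]
  ring_nf

lemma sArea_add_smul {a b : ℝ} (hab : a + b = 1) (x y q r : ℝ × ℝ) :
    sArea (a • x + b • y) q r = a * sArea x q r + b * sArea y q r := by
  obtain rfl : b = 1 - a := by linarith
  simp only [sArea, Prod.fst_add, Prod.snd_add, Prod.smul_fst, Prod.smul_snd, smul_eq_mul]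
  ring

lemma convexOn_triArea (q r : ℝ × ℝ) : ConvexOn ℝ Set.univ (triArea · q r) := by
  refine ⟨convex_univ, fun x _ y _ a b ha hb hab => ?_⟩
  simp only [triArea_eq_abs_sArea, sArea_add_smul hab, smul_eq_mul]
  calc |a * sArea x q r + b * sArea y q r| ≤ |a * sArea x q r| + |b * sArea y q r| :=
        abs_add_le _ _
    _ = a * |sArea x q r| + b * |sArea y q r| := by
        rw [abs_mul, abs_mul, abs_of_nonneg ha, abs_of_nonneg hb]

lemma exists_triArea_le_of_mem_convexHull {s : Set (ℝ × ℝ)} {p q r : ℝ × ℝ}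
    (hp : p ∈ convexHull ℝ s) (hq : q ∈ convexHull ℝ s) (hr : r ∈ convexHull ℝ s) :
    ∃ p' ∈ s, ∃ q' ∈ s, ∃ r' ∈ s, triArea p q r ≤ triArea p' q' r' := by
  obtain ⟨p', hp's, hp'⟩ :=
    (convexOn_triArea q r).exists_ge_of_mem_convexHull (Set.subset_univ _) hp
  obtain ⟨q', hq's, hq'⟩ :=
    (convexOn_triArea r p').exists_ge_of_mem_convexHull (Set.subset_univ _) hq
  obtain ⟨r', hr's, hr'⟩ :=
    (convexOn_triArea p' q').exists_ge_of_mem_convexHull (Set.subset_univ _) hr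
  refine ⟨p', hp's, q', hq's, r', hr's, ?_⟩
  calc triArea p q r ≤ triArea p' q r := hp'
    _ = triArea q r p' := triArea_rotate ..
    _ ≤ triArea q' r p' := hq'
    _ = triArea r p' q' := triArea_rotate ..
    _ ≤ triArea r' p' q' := hr'
    _ = triArea p' q' r' := by rw [triArea_rotate, triArea_rotate]

open Pointwise in
/-- The triangle `p q r` is the image of the standard triangle under `x ↦ p + L x`, where the
columns of `L` are `q - p` and `r - p`, so `|det L| = 2 * triArea p q r`. -/
lemma volume_convexHull_triple (p q r : ℝ × ℝ) :
    volume (convexHull ℝ {p, q, r}) = ENNReal.ofReal (2 * triArea p q r) *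
      volume (convexHull ℝ ({0, (1, 0), (0, 1)} : Set (ℝ × ℝ))) := by
  set L := Matrix.toLin (Module.Basis.finTwoProd ℝ) (Module.Basis.finTwoProd ℝ)
    !![q.1 - p.1, r.1 - p.1; q.2 - p.2, r.2 - p.2]
  have hL : ∀ x y : ℝ, L (x, y) = (x * (q.1 - p.1) + y * (r.1 - p.1),
      x * (q.2 - p.2) + y * (r.2 - p.2)) := by
    intro x y
    simp only [L, Matrix.toLin_finTwoProd_apply]
    ext <;> simp <;> ring
  have hvert : ({p, q, r} : Set (ℝ × ℝ)) = p +ᵥ L '' {0, (1, 0), (0, 1)} := by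
    have hshift : ∀ z : ℝ × ℝ, p + (z.1 - p.1, z.2 - p.2) = z := fun z => by ext <;> simp
    simp only [Set.image_insert_eq, Set.image_singleton, hL, Prod.fst_zero, Prod.snd_zero,
      Set.vadd_set_insert, Set.vadd_set_singleton, vadd_eq_add, one_mul, zero_mul, add_zero,
      zero_add, Prod.mk_zero_zero, hshift]
  have hdet : |LinearMap.det L| = 2 * triArea p q r := by
    rw [LinearMap.det_toLin, Matrix.det_fin_two_of, triArea_eq_abs_sArea, sArea, ← abs_two,
      ← abs_mul]
    ring_nf
  rw [hvert, convexHull_vadd, measure_vadd, ← L.image_convexHull,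
    Measure.addHaar_image_linearMap, hdet]

lemma hullArea_mono {S T : Finset (ℝ × ℝ)} (h : S ⊆ T) : hullArea S ≤ hullArea T :=
  measure_mono (convexHull_mono (Finset.coe_subset.mpr h))

lemma hullArea_le_of_triArea_le {p q r p' q' r' : ℝ × ℝ}
    (h : triArea p q r ≤ triArea p' q' r') : hullArea {p, q, r} ≤ hullArea {p', q', r'} := by
  simp only [hullArea, Finset.coe_insert, Finset.coe_singleton]
  rw [volume_convexHull_triple p q r, volume_convexHull_triple p' q' r']
  gcongr

lemma exists_subset_card_three_hullArea_le {V S : Finset (ℝ × ℝ)} (hV : 3 ≤ V.card)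
    (hS : S.card = 3) (hSV : (S : Set (ℝ × ℝ)) ⊆ convexHull ℝ V) :
    ∃ U ∈ V.powersetCard 3, hullArea S ≤ hullArea U := by
  obtain ⟨p, q, r, -, -, -, rfl⟩ := Finset.card_eq_three.mp hS
  simp only [Finset.coe_insert, Finset.coe_singleton, Set.insert_subset_iff,
    Set.singleton_subset_iff] at hSV
  obtain ⟨p', hp', q', hq', r', hr', harea⟩ :=
    exists_triArea_le_of_mem_convexHull hSV.1 hSV.2.1 hSV.2.2
  have hsub : {p', q', r'} ⊆ V := by
    simp only [Finset.insert_subset_iff, Finset.singleton_subset_iff]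
    exact ⟨hp', hq', hr'⟩
  obtain ⟨U, hU, hUV, hUcard⟩ := Finset.exists_subsuperset_card_eq hsub Finset.card_le_three hV
  refine ⟨U, Finset.mem_powersetCard.mpr ⟨hUV, hUcard⟩, ?_⟩
  calc hullArea {p, q, r} ≤ hullArea {p', q', r'} := hullArea_le_of_triArea_le harea
    _ ≤ hullArea U := hullArea_mono hU

/-- Moving the apex of a triangle along an open segment of the boundary of a convex
region cannot beat both endpoints; consequently a maximum-area inscribed triangle has
its vertices at vertices of the polygon. -/
theorem apex_on_segment_and_max_triangle :
    (∀ (K : Set (ℝ × ℝ)), Convex ℝ K → ∀ u v w b c : ℝ × ℝ,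
      u ∈ frontier K → w ∈ frontier K → v ∈ openSegment ℝ u w →
      triArea v b c ≤ max (triArea u b c) (triArea w b c)) ∧
    (∀ V : Finset (ℝ × ℝ), 3 ≤ V.card →
      (∀ v ∈ V, v ∉ convexHull ℝ ((V.erase v : Finset (ℝ × ℝ)) : Set (ℝ × ℝ))) →
      ∃ T ⊆ V, T.card = 3 ∧
        ∀ S : Finset (ℝ × ℝ), S.card = 3 →
          (S : Set (ℝ × ℝ)) ⊆ frontier (convexHull ℝ (V : Set (ℝ × ℝ))) →
          hullArea S ≤ hullArea T) := by
  refine ⟨fun K _ u v w b c _ _ hv => (convexOn_triArea b c).le_max_of_mem_segment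
    (Set.mem_univ u) (Set.mem_univ w) (openSegment_subset_segment ℝ u w hv), ?_⟩
  intro V hV _
  obtain ⟨T, hT, hTmax⟩ := Finset.exists_max_image (V.powersetCard 3) hullArea
    (Finset.powersetCard_nonempty.mpr hV)
  rw [Finset.mem_powersetCard] at hT
  refine ⟨T, hT.1, hT.2, fun S hS hSV => ?_⟩
  obtain ⟨U, hU, hSU⟩ := exists_subset_card_three_hullArea_le hV hS
    (hSV.trans (V.finite_toSet.isClosed_convexHull ℝ).frontier_subset)
  exact hSU.trans (hTmax U hU)
end

section
/- The shoelace formula for a convex quadrilateral: if p, q, r, s are points in ℝ² in convex position in counterclockwise order, then the area of their convex hull equals (1/2)(x_p(y_q−y_s) + x_q(y_r−y_p) + x_r(y_s−y_q) + x_s(y_p−y_r)), and this equals area(pqr) + area(prs) where area denotes triangle area. -/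
/-!
The diagonals `pr` and `qs` of a convex quadrilateral cross, so its convex hull is the union of
the triangles `pqr` and `prs`. These lie on opposite sides of the line `pr`, so they overlap in a
null set and the hull's area is the sum of theirs. A triangle is the image of the unit triangle
(area `1/2`, computed by slicing) under an affine map whose linear part has determinant
`cross (q - p) (r - p)`, and the two positive cross products add up to the shoelace sum.
-/

open MeasureTheory

open Set Pointwise

section VectorSpace

variable {E : Type*} [AddCommGroup E] [Module ℝ E]

lemma segment_subset_union_segment {x y m : E} (hm : m ∈ segment ℝ x y) :
    segment ℝ x y ⊆ segment ℝ x m ∪ segment ℝ m y := by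
  intro z hz
  rw [mem_segment_iff_wbtw] at hm hz
  obtain ⟨t, ht, rfl⟩ := hm
  obtain ⟨u, hu, rfl⟩ := hz
  simp only [mem_union, mem_segment_iff_wbtw]
  rcases le_total u t with hut | htu
  · left
    simpa only [AffineMap.lineMap_apply] using
      wbtw_smul_vadd_smul_vadd_of_nonneg_of_le x (y -ᵥ x) hu.1 hut
  · right
    refine Wbtw.trans_left_right (w := x) ⟨u, hu, rfl⟩ ?_
    simpa only [AffineMap.lineMap_apply] using
      wbtw_smul_vadd_smul_vadd_of_nonneg_of_le x (y -ᵥ x) ht.1 htu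

lemma convexHull_four_eq_union_of_mem_segment {p q r s m : E} (hpr : m ∈ segment ℝ p r)
    (hqs : m ∈ segment ℝ q s) :
    convexHull ℝ {p, q, r, s} = convexHull ℝ {p, q, r} ∪ convexHull ℝ {p, r, s} := by
  refine subset_antisymm ?_ (union_subset (convexHull_mono (by simp [insert_subset_iff]))
    (convexHull_mono (by simp [insert_subset_iff])))
  have hpr₁ : segment ℝ p r ⊆ convexHull ℝ {p, q, r} := by
    rw [← convexHull_pair]; exact convexHull_mono (by simp [insert_subset_iff])
  have hpr₂ : segment ℝ p r ⊆ convexHull ℝ {p, r, s} := by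
    rw [← convexHull_pair]; exact convexHull_mono (by simp [insert_subset_iff])
  rw [show ({p, q, r, s} : Set E) = {p, r, q, s} by rw [insert_comm q r], ← convexJoin_segments]
  intro x hx
  obtain ⟨y, hy, z, hz, hx⟩ := mem_convexJoin.1 hx
  rcases segment_subset_union_segment hqs hz with hz | hz
  · have hq : q ∈ convexHull ℝ {p, q, r} := subset_convexHull ℝ _ (by simp)
    exact .inl <| (convex_convexHull ℝ _).segment_subset (hpr₁ hy)
      ((convex_convexHull ℝ _).segment_subset hq (hpr₁ hpr) hz) hx
  · have hs : s ∈ convexHull ℝ {p, r, s} := subset_convexHull ℝ _ (by simp)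
    exact .inr <| (convex_convexHull ℝ _).segment_subset (hpr₂ hy)
      ((convex_convexHull ℝ _).segment_subset (hpr₂ hpr) hs hz) hx

lemma smul_add_smul_add_smul_mem_convexHull (x y z : E) {a b c : ℝ} (ha : 0 ≤ a) (hb : 0 ≤ b)
    (hc : 0 ≤ c) (habc : a + b + c = 1) : a • x + b • y + c • z ∈ convexHull ℝ {x, y, z} := by
  simpa [Fin.sum_univ_three, add_assoc] using (convex_convexHull ℝ ({x, y, z} : Set E)).sum_mem
    (t := Finset.univ) (w := ![a, b, c]) (z := ![x, y, z])
    (by intro i _; fin_cases i <;> assumption) (by simp [Fin.sum_univ_three, habc])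
    (by intro i _; fin_cases i <;> exact subset_convexHull ℝ _ (by simp))

end VectorSpace

lemma addHaar_setOf_eq_eq_zero {E : Type*} [NormedAddCommGroup E] [NormedSpace ℝ E]
    [MeasurableSpace E] [BorelSpace E] [FiniteDimensional ℝ E] (μ : Measure E)
    [μ.IsAddHaarMeasure] {f : E →ₗ[ℝ] ℝ} (hf : f ≠ 0) (c : ℝ) : μ {z | f z = c} = 0 := by
  obtain ⟨z₀, rfl⟩ := LinearMap.surjective_of_ne_zero hf c
  have : {z | f z = f z₀} = (fun z ↦ -z₀ + z) ⁻¹' (LinearMap.ker f : Set E) := by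
    ext z
    simp only [mem_ofPred_eq, mem_preimage, SetLike.mem_coe, LinearMap.mem_ker, map_add, map_neg,
      neg_add_eq_zero]
    exact eq_comm
  rw [this, measure_preimage_add]
  exact Measure.addHaar_submodule μ _ (mt LinearMap.ker_eq_top.1 hf)

lemma cross_sub_sub (a b c : ℝ × ℝ) : cross (b - a) (c - b) = cross (b - a) (c - a) := by
  simp only [cross, Prod.fst_sub, Prod.snd_sub]; ring

lemma cross_sub_sub_rotate (a b c : ℝ × ℝ) :
    cross (b - a) (c - a) = cross (c - b) (a - b) := by
  simp only [cross, Prod.fst_sub, Prod.snd_sub]; ring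

noncomputable def crossₗ (u : ℝ × ℝ) : ℝ × ℝ →ₗ[ℝ] ℝ :=
  u.1 • LinearMap.snd ℝ ℝ ℝ - u.2 • LinearMap.fst ℝ ℝ ℝ

@[simp]
lemma crossₗ_apply (u v : ℝ × ℝ) : crossₗ u v = cross u v := by
  simp [crossₗ, cross]

lemma crossₗ_ne_zero {u : ℝ × ℝ} (hu : u ≠ 0) : crossₗ u ≠ 0 := by
  intro h
  have h₀ : cross u (-u.2, u.1) = 0 := by rw [← crossₗ_apply, h, LinearMap.zero_apply]
  simp only [cross] at h₀
  have h₁ : u.1 = 0 := by nlinarith [sq_nonneg u.1, sq_nonneg u.2]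
  have h₂ : u.2 = 0 := by nlinarith [sq_nonneg u.1, sq_nonneg u.2]
  exact hu (Prod.ext h₁ h₂)

lemma volume_setOf_cross_eq {u : ℝ × ℝ} (hu : u ≠ 0) (c : ℝ) : volume {z | cross u z = c} = 0 := by
  simpa using addHaar_setOf_eq_eq_zero volume (crossₗ_ne_zero hu) c

lemma volume_convexHull_inter_eq_zero {p q r s : ℝ × ℝ} (hpr : p ≠ r)
    (hq : 0 ≤ cross (q - p) (r - p)) (hs : 0 ≤ cross (r - p) (s - p)) :
    volume (convexHull ℝ {p, q, r} ∩ convexHull ℝ {p, r, s}) = 0 := by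
  refine measure_mono_null ?_ (volume_setOf_cross_eq (sub_ne_zero.2 hpr.symm) (cross (r - p) p))
  rintro z ⟨hz₁, hz₂⟩
  refine le_antisymm ?_ ?_
  · refine convexHull_min ?_ (convex_halfSpace_le (crossₗ (r - p)).isLinear _) hz₁
    simp only [insert_subset_iff, singleton_subset_iff, mem_ofPred_eq, crossₗ_apply, cross,
      Prod.fst_sub, Prod.snd_sub] at hq ⊢
    exact ⟨le_rfl, by linarith, by linarith⟩
  · refine convexHull_min ?_ (convex_halfSpace_ge (crossₗ (r - p)).isLinear _) hz₂
    simp only [insert_subset_iff, singleton_subset_iff, mem_ofPred_eq, crossₗ_apply, cross,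
      Prod.fst_sub, Prod.snd_sub] at hs ⊢
    exact ⟨le_rfl, by linarith, by linarith⟩

lemma convexHull_zero_one_zero_zero_one :
    convexHull ℝ ({0, (1, 0), (0, 1)} : Set (ℝ × ℝ)) =
      {z : ℝ × ℝ | 0 ≤ z.1 ∧ 0 ≤ z.2 ∧ z.1 + z.2 ≤ 1} := by
  refine subset_antisymm (convexHull_min ?_ ?_) ?_
  · simp [insert_subset_iff]
  · intro x hx y hy a b ha hb hab
    simp only [mem_ofPred_eq, Prod.fst_add, Prod.snd_add, Prod.smul_fst, Prod.smul_snd,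
      smul_eq_mul] at *
    refine ⟨by nlinarith, by nlinarith, by nlinarith⟩
  · rintro ⟨x, y⟩ ⟨hx, hy, hxy⟩
    simpa using smul_add_smul_add_smul_mem_convexHull (0 : ℝ × ℝ) (1, 0) (0, 1)
      (a := 1 - x - y) (by linarith) hx hy (by ring)

lemma volume_convexHull_zero_one_zero_zero_one :
    volume (convexHull ℝ ({0, (1, 0), (0, 1)} : Set (ℝ × ℝ))) = ENNReal.ofReal (1 / 2) := by
  have hmeas : MeasurableSet (convexHull ℝ ({0, (1, 0), (0, 1)} : Set (ℝ × ℝ))) :=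
    ((Set.toFinite _).isClosed_convexHull ℝ).measurableSet
  rw [convexHull_zero_one_zero_zero_one] at hmeas ⊢
  set T : Set (ℝ × ℝ) := {z | 0 ≤ z.1 ∧ 0 ≤ z.2 ∧ z.1 + z.2 ≤ 1}
  have hslice (x : ℝ) : volume (Prod.mk x ⁻¹' T) =
      (Icc 0 1).indicator (fun x ↦ ENNReal.ofReal (1 - x)) x := by
    by_cases hx : 0 ≤ x
    · have : Prod.mk x ⁻¹' T = Icc 0 (1 - x) := by
        ext y; simp [T, hx, le_sub_iff_add_le']
      rw [this, Real.volume_Icc, sub_zero]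
      by_cases hx₁ : x ≤ 1
      · rw [indicator_of_mem (mem_Icc.2 ⟨hx, hx₁⟩)]
      · rw [indicator_of_notMem (notMem_Icc_of_gt (not_le.1 hx₁)), ENNReal.ofReal_eq_zero]
        linarith
    · have : Prod.mk x ⁻¹' T = ∅ := by
        ext y; simp [T, hx]
      rw [this, measure_empty, indicator_of_notMem (notMem_Icc_of_lt (not_le.1 hx))]
  rw [Measure.volume_eq_prod, Measure.prod_apply hmeas]
  calc ∫⁻ x, volume (Prod.mk x ⁻¹' T)
      = ∫⁻ x in Icc 0 1, ENNReal.ofReal (1 - x) := by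
        simp_rw [hslice, lintegral_indicator measurableSet_Icc]
    _ = ENNReal.ofReal (∫ x in Icc 0 1, (1 - x)) :=
        (ofReal_integral_eq_lintegral_ofReal (continuous_const.sub continuous_id).integrableOn_Icc
          ((ae_restrict_iff' measurableSet_Icc).2 (ae_of_all _ fun x hx ↦ sub_nonneg.2 hx.2))).symm
    _ = ENNReal.ofReal (1 / 2) := by
        rw [integral_Icc_eq_integral_Ioc, ← intervalIntegral.integral_of_le zero_le_one,
          intervalIntegral.integral_sub intervalIntegrable_const
            intervalIntegral.intervalIntegrable_id]
        norm_num

lemma det_toSpanSingleton_coprod (u v : ℝ × ℝ) :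
    LinearMap.det ((LinearMap.toSpanSingleton ℝ _ u).coprod (LinearMap.toSpanSingleton ℝ _ v)) =
      cross u v := by
  rw [← LinearMap.det_toMatrix (Module.Basis.finTwoProd ℝ), Matrix.det_fin_two]
  simp only [LinearMap.toMatrix_apply, Module.Basis.finTwoProd_zero, Module.Basis.finTwoProd_one,
    LinearMap.coprod_apply, LinearMap.toSpanSingleton_apply, one_smul, zero_smul, add_zero,
    zero_add,
    Module.Basis.coe_finTwoProd_repr, Matrix.cons_val_zero, Matrix.cons_val_one,
    Matrix.cons_val_fin_one, cross]
  ring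

lemma volume_convexHull_triangle (p q r : ℝ × ℝ) :
    volume (convexHull ℝ {p, q, r}) = ENNReal.ofReal (|cross (q - p) (r - p)| / 2) := by
  set L := (LinearMap.toSpanSingleton ℝ _ (q - p)).coprod (LinearMap.toSpanSingleton ℝ _ (r - p))
  have hvertices : ({p, q, r} : Set (ℝ × ℝ)) = p +ᵥ L '' {0, (1, 0), (0, 1)} := by
    simp [L, image_insert_eq, vadd_set_insert]
  rw [hvertices, convexHull_vadd, ← LinearMap.image_convexHull, measure_vadd,
    Measure.addHaar_image_linearMap, det_toSpanSingleton_coprod,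
    volume_convexHull_zero_one_zero_zero_one,
    ← ENNReal.ofReal_mul (abs_nonneg _), mul_one_div]

lemma exists_mem_segment_mem_segment_of_cross {p q r s : ℝ × ℝ} (hpqr : 0 < cross (q - p) (r - p))
    (hprs : 0 < cross (r - p) (s - p)) (hpqs : 0 ≤ cross (q - p) (s - p))
    (hqrs : 0 ≤ cross (r - q) (s - q)) : ∃ m, m ∈ segment ℝ p r ∧ m ∈ segment ℝ q s := by
  have hsum : cross (r - q) (s - q) + cross (q - p) (s - p) =
      cross (r - p) (s - p) + cross (q - p) (r - p) := by
    simp only [cross, Prod.fst_sub, Prod.snd_sub]; ring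
  -- The diagonals cross at the point dividing `qs` in the ratio of the areas of `pqr` and `prs`,
  -- and `pr` in the ratio of the areas of `pqs` and `qrs`.
  have hcomb : cross (r - q) (s - q) • p + cross (q - p) (s - p) • r =
      cross (r - p) (s - p) • q + cross (q - p) (r - p) • s := by
    ext <;> simp only [cross, Prod.fst_add, Prod.snd_add, Prod.fst_sub, Prod.snd_sub, Prod.smul_fst,
      Prod.smul_snd, smul_eq_mul] <;> ring
  refine ⟨(cross (r - p) (s - p) + cross (q - p) (r - p))⁻¹ •
    (cross (r - p) (s - p) • q + cross (q - p) (r - p) • s), ?_, ?_⟩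
  · rw [← hcomb, ← hsum]
    exact mem_segment_iff_div.2 ⟨_, _, hqrs, hpqs, by rw [hsum]; positivity,
      by simp only [div_eq_inv_mul, smul_add, mul_smul]⟩
  · exact mem_segment_iff_div.2 ⟨_, _, hprs.le, hpqr.le, by positivity,
      by simp only [div_eq_inv_mul, smul_add, mul_smul]⟩

lemma triArea_eq_abs_cross (p q r : ℝ × ℝ) : triArea p q r = |cross (q - p) (r - p)| / 2 := rfl

/-- Shoelace formula for a convex quadrilateral given counterclockwise: the hull area
equals the shoelace expression, which equals the sum of the two triangle areas. -/
theorem shoelace_convex_quadrilateral (p q r s : ℝ × ℝ)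
    (h1 : 0 < cross (q - p) (r - q)) (h2 : 0 < cross (r - q) (s - r))
    (h3 : 0 < cross (s - r) (p - s)) (h4 : 0 < cross (p - s) (q - p)) :
    (volume (convexHull ℝ ({p, q, r, s} : Set (ℝ × ℝ)))).toReal
        = (p.1 * (q.2 - s.2) + q.1 * (r.2 - p.2) + r.1 * (s.2 - q.2) + s.1 * (p.2 - r.2)) / 2 ∧
    (p.1 * (q.2 - s.2) + q.1 * (r.2 - p.2) + r.1 * (s.2 - q.2) + s.1 * (p.2 - r.2)) / 2
        = triArea p q r + triArea p r s := by
  have hpqr : 0 < cross (q - p) (r - p) := cross_sub_sub p q r ▸ h1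
  have hqrs : 0 < cross (r - q) (s - q) := cross_sub_sub q r s ▸ h2
  have hprs : 0 < cross (r - p) (s - p) := by rw [cross_sub_sub_rotate, ← cross_sub_sub]; exact h3
  have hpqs : 0 < cross (q - p) (s - p) := by
    rw [← cross_sub_sub_rotate s, ← cross_sub_sub]; exact h4
  have hpr : p ≠ r := by rintro rfl; simp [cross] at hpqr
  obtain ⟨m, hmpr, hmqs⟩ := exists_mem_segment_mem_segment_of_cross hpqr hprs hpqs.le hqrs.le
  have hvol : volume (convexHull ℝ ({p, q, r, s} : Set (ℝ × ℝ))) =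
      ENNReal.ofReal (cross (q - p) (r - p) / 2) + ENNReal.ofReal (cross (r - p) (s - p) / 2) := by
    rw [convexHull_four_eq_union_of_mem_segment hmpr hmqs,
      measure_union₀ ((convex_convexHull ℝ _).nullMeasurableSet _)
        (volume_convexHull_inter_eq_zero hpr hpqr.le hprs.le),
      volume_convexHull_triangle, volume_convexHull_triangle, abs_of_pos hpqr, abs_of_pos hprs]
  have hshoelace :
      (p.1 * (q.2 - s.2) + q.1 * (r.2 - p.2) + r.1 * (s.2 - q.2) + s.1 * (p.2 - r.2)) / 2 =
        cross (q - p) (r - p) / 2 + cross (r - p) (s - p) / 2 := by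
    simp only [cross, Prod.fst_sub, Prod.snd_sub]; ring
  refine ⟨?_, ?_⟩
  · rw [hvol, hshoelace, ENNReal.toReal_add ENNReal.ofReal_ne_top ENNReal.ofReal_ne_top,
      ENNReal.toReal_ofReal (by positivity), ENNReal.toReal_ofReal (by positivity)]
  · rw [hshoelace, triArea_eq_abs_cross, triArea_eq_abs_cross, abs_of_pos hpqr, abs_of_pos hprs]
end
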